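/- Swaps are not reversible under fees: if φ < 1, then for x > 0 and reserves r0, r1 > 0, letting α = φ·r1/(r0 + φ·x) be the swap rate of the forward swap, the reverse swap rate satisfies SX(α·x, r1 − α·x, r0 + x) < 1/α, i.e., swapping the received α·x output tokens back yields strictly less than the original x input tokens. -/

import Mathlib

/-! Multiplying the reverse rate by the forward rate `α` gives the round-trip factor
`φ² (r0 + x) / (r0 + φ² x)`, which is below `1` because `r0 > 0` and `φ² < 1`. -/

/-- The fee-adjusted constant-product rate `SX(x, a, b)`. -/
noncomputable def swapRate (φ x a b : ℝ) : ℝ := φ * b / (a + φ * x)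

theorem swapRate_reverse_mul_swapRate {φ x a b : ℝ} (ha : a + φ * x ≠ 0) (hb : b ≠ 0) :
    let α := swapRate φ x a b
    swapRate φ (α * x) (b - α * x) (a + x) * α = φ ^ 2 * (a + x) / (a + φ ^ 2 * x) := by
  intro α
  have hα : α * (a + φ * x) = φ * b := div_mul_cancel₀ _ ha
  have hden : b - α * x + φ * (α * x) = b * (a + φ ^ 2 * x) / (a + φ * x) := by
    rw [eq_div_iff ha]
    linear_combination (φ - 1) * x * hα
  rw [swapRate, hden, div_div_eq_mul_div, show α = φ * b / (a + φ * x) from rfl, div_mul_div_comm,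
    show φ * (a + x) * (a + φ * x) * (φ * b) = φ ^ 2 * (a + x) * (b * (a + φ * x)) by ring,
    show b * (a + φ ^ 2 * x) * (a + φ * x) = (a + φ ^ 2 * x) * (b * (a + φ * x)) by ring,
    mul_div_mul_right _ _ (mul_ne_zero hb ha)]

theorem mul_add_div_add_mul_lt_one {c a x : ℝ} (hc0 : 0 ≤ c) (hc1 : c < 1) (ha : 0 < a)
    (hx : 0 ≤ x) : c * (a + x) / (a + c * x) < 1 := by
  rw [div_lt_one (by positivity)]
  linarith [mul_lt_of_lt_one_left ha hc1]

theorem stmt19 (φ x r0 r1 : ℝ) (hφ0 : 0 < φ) (hφ1 : φ < 1)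
    (hx : 0 < x) (hr0 : 0 < r0) (hr1 : 0 < r1) :
    let α := φ * r1 / (r0 + φ * x)
    φ * (r0 + x) / ((r1 - α * x) + φ * (α * x)) < 1 / α := by
  intro α
  have hs : 0 < r0 + φ * x := by positivity
  have hα : 0 < α := by positivity
  have hφsq : φ ^ 2 < 1 := by nlinarith
  rw [lt_div_iff₀ hα]
  calc swapRate φ (α * x) (r1 - α * x) (r0 + x) * α
      = φ ^ 2 * (r0 + x) / (r0 + φ ^ 2 * x) := swapRate_reverse_mul_swapRate hs.ne' hr1.ne'
    _ < 1 := mul_add_div_add_mul_lt_one (by positivity) hφsq hr0 hx.le
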